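/- Let ω be a weight, let f be a monic polynomial of degree d ≥ 1 with simple zeros, none in the open unit disk 𝔻 and at least one on the unit circle 𝕋, and let p_n be the n-th optimal polynomial approximant to 1/f in H²_ω. Then there exist δ > 0 and a strictly increasing sequence (n_k) of natural numbers such that for all k, the top coefficient of 1 − p_{n_k} f satisfies |coeff_{n_k+d}(1 − p_{n_k} f)| ≥ δ/(ω_{n_k+d}·S_{n_k+d}). -/

import Mathlib

open Polynomial Filter Topology MeasureTheory Metric Asymptotics

noncomputable section

/-- A weight: positive, monotone, ω₀ = 1, ω_n/ω_{n-⌊√n⌋} → 1, ∑ 1/ω_k = ∞. -/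
def IsWeight (ω : ℕ → ℝ) : Prop :=
  (∀ k, 0 < ω k) ∧ (Monotone ω ∨ Antitone ω) ∧ ω 0 = 1 ∧
    Filter.Tendsto (fun n => ω n / ω (n - Nat.sqrt n)) Filter.atTop (nhds 1) ∧
    ¬ Summable (fun k => 1 / ω k)

/-- Squared H²_ω norm of a polynomial. -/
def wNormSq (ω : ℕ → ℝ) (g : Polynomial ℂ) : ℝ :=
  ∑ k ∈ Finset.range (g.natDegree + 1), ω k * ‖g.coeff k‖ ^ 2

/-- `p` is the n-th optimal polynomial approximant to `1/f` in `H²_ω`. -/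
def IsOPA (ω : ℕ → ℝ) (f : Polynomial ℂ) (n : ℕ) (p : Polynomial ℂ) : Prop :=
  p.degree ≤ (n : ℕ) ∧ ∀ q : Polynomial ℂ, q.degree ≤ (n : ℕ) →
    wNormSq ω (1 - p * f) ≤ wNormSq ω (1 - q * f)

/-- Partial sums `S_N = ∑_{k=0}^N 1/ω_k`. -/
def S (ω : ℕ → ℝ) (N : ℕ) : ℝ := ∑ k ∈ Finset.range (N + 1), 1 / ω k

/-- Truncated reproducing kernel `k_N(z,b) = ∑_{k=0}^N b̄^k z^k / ω_k`. -/
def kN (ω : ℕ → ℝ) (N : ℕ) (z b : ℂ) : ℂ :=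
  ∑ k ∈ Finset.range (N + 1), (starRingEnd ℂ b) ^ k * z ^ k / (ω k : ℂ)

/-- Zero-counting probability measure of a polynomial: the average of Dirac
masses at its roots, counted with multiplicity. -/
def zeroMeasure (q : Polynomial ℂ) : Measure ℂ :=
  (q.natDegree : ENNReal)⁻¹ • (q.roots.map (fun z => Measure.dirac z)).sum

/-- Normalized arclength (uniform) measure on the unit circle. -/
def nuT : Measure ℂ :=
  (ENNReal.ofReal (2 * Real.pi))⁻¹ •
    Measure.map (fun θ : ℝ => Complex.exp (θ * Complex.I))
      (MeasureTheory.volume.restrict (Set.Ioc 0 (2 * Real.pi)))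

/-!
Put `D n = ‖1 - p_n f‖²_ω` and let `c_n` be the top coefficient of `1 - p_n f`.

* At a zero `b ∈ 𝕋` of `f`, `(1 - p_n f)(b) = 1`, so Cauchy–Schwarz gives `D n * S_{n+d} ≥ 1`.
* Optimality makes `1 - p_{n+1} f` orthogonal to `X^{n+1} f`, and dropping the top coefficient
  of `p_{n+1}` gives a competitor of degree `n`; by Pythagoras
  `D n ≤ D (n+1) + |c_{n+1}|² ‖X^{n+1} f‖²_ω ≤ D (n+1) + |c_{n+1}|² B ω_{n+1+d}`,
  the last step because `ω_{m+1}/ω_m → 1`.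
* `D n → 0` because `f` is cyclic, and so is each factor `X - b` with `|b| ≥ 1`: the normalized
  reproducing kernel at `b` equals `1` at `b` and has norm at most `S_M^{-1/2} → 0`.

If `|c_n| < δ/(ω_{n+d} S_{n+d})` for all large `n`, where `B δ² = 1/2`, the second point makes
`D n - 1/(2 S_{n+d})` nondecreasing; by the first it is positive, contradicting the third.
-/

open Finset

section WeightedNorm

variable {ω : ℕ → ℝ}

def weightedCoeffs (ω : ℕ → ℝ) (N : ℕ) : ℂ[X] →ₗ[ℂ] EuclideanSpace ℂ (Fin N) where
  toFun g := WithLp.toLp 2 fun k => (√(ω k) : ℂ) * g.coeff k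
  map_add' g h := by ext; simp [mul_add]
  map_smul' c g := by ext; simp; ring

lemma wNormSq_eq_sum_range {g : ℂ[X]} {N : ℕ} (hN : g.natDegree < N) :
    wNormSq ω g = ∑ k ∈ range N, ω k * ‖g.coeff k‖ ^ 2 := by
  refine sum_subset (range_subset_range.2 hN) fun k _ hk => ?_
  rw [coeff_eq_zero_of_natDegree_lt (by simpa using hk)]
  simp

lemma wNormSq_eq_norm_sq (hω : ∀ k, 0 ≤ ω k) {g : ℂ[X]} {N : ℕ} (hN : g.natDegree < N) :
    wNormSq ω g = ‖weightedCoeffs ω N g‖ ^ 2 := by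
  rw [wNormSq_eq_sum_range hN, EuclideanSpace.norm_sq_eq, ← Fin.sum_univ_eq_sum_range]
  refine sum_congr rfl fun k _ => ?_
  simp [weightedCoeffs, mul_pow, Real.sq_sqrt (hω k)]

lemma wNormSq_nonneg (hω : ∀ k, 0 ≤ ω k) (g : ℂ[X]) : 0 ≤ wNormSq ω g :=
  sum_nonneg fun k _ => mul_nonneg (hω k) (sq_nonneg _)

lemma wNormSq_X_pow (j : ℕ) : wNormSq ω (X ^ j) = ω j := by
  rw [wNormSq_eq_sum_range (N := j + 1) (by simp), sum_eq_single_of_mem j (by simp)]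
  · simp
  · intro k _ hk
    simp [coeff_X_pow, hk]

def wNorm (ω : ℕ → ℝ) (g : ℂ[X]) : ℝ := √(wNormSq ω g)

lemma wNorm_sq (hω : ∀ k, 0 ≤ ω k) (g : ℂ[X]) : wNorm ω g ^ 2 = wNormSq ω g :=
  Real.sq_sqrt (wNormSq_nonneg hω g)

lemma wNorm_eq_norm (hω : ∀ k, 0 ≤ ω k) {g : ℂ[X]} {N : ℕ} (hN : g.natDegree < N) :
    wNorm ω g = ‖weightedCoeffs ω N g‖ := by
  rw [wNorm, wNormSq_eq_norm_sq hω hN, Real.sqrt_sq (norm_nonneg _)]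

lemma wNorm_add_le (hω : ∀ k, 0 ≤ ω k) (g h : ℂ[X]) :
    wNorm ω (g + h) ≤ wNorm ω g + wNorm ω h := by
  set N := (g + h).natDegree + g.natDegree + h.natDegree + 1
  rw [wNorm_eq_norm hω (N := N) (by omega), wNorm_eq_norm hω (N := N) (by omega),
    wNorm_eq_norm hω (N := N) (by omega), map_add]
  exact norm_add_le _ _

lemma wNorm_sum_le (hω : ∀ k, 0 ≤ ω k) {ι : Type*} (s : Finset ι) (g : ι → ℂ[X]) :
    wNorm ω (∑ i ∈ s, g i) ≤ ∑ i ∈ s, wNorm ω (g i) :=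
  Finset.le_sum_of_subadditive _ (by simp [wNorm, wNormSq]) (wNorm_add_le hω) s g

lemma wNorm_C_mul (hω : ∀ k, 0 ≤ ω k) (c : ℂ) (g : ℂ[X]) :
    wNorm ω (C c * g) = ‖c‖ * wNorm ω g := by
  set N := (C c * g).natDegree + g.natDegree + 1
  rw [wNorm_eq_norm hω (N := N) (by omega), wNorm_eq_norm hω (N := N) (by omega),
    ← smul_eq_C_mul, map_smul, norm_smul]

lemma wNorm_X_mul_le (hω : ∀ k, 0 ≤ ω k) {K : ℝ} (hK : ∀ k, ω (k + 1) ≤ K * ω k)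
    (g : ℂ[X]) : wNorm ω (X * g) ≤ √K * wNorm ω g := by
  rw [wNorm, wNorm, ← Real.sqrt_mul' _ (wNormSq_nonneg hω g)]
  refine Real.sqrt_le_sqrt ?_
  have hXg : (X * g).natDegree < g.natDegree + 2 :=
    natDegree_mul_le.trans_lt (by linarith [natDegree_X_le (R := ℂ)])
  rw [wNormSq_eq_sum_range hXg, sum_range_succ',
    wNormSq_eq_sum_range (N := g.natDegree + 1) (by omega), mul_sum]
  simp only [coeff_X_mul, mul_coeff_zero, coeff_X_zero, zero_mul, norm_zero]
  refine (add_le_of_nonpos_right (by simp)).trans (sum_le_sum fun k _ => ?_)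
  rw [← mul_assoc]
  exact mul_le_mul_of_nonneg_right (hK k) (sq_nonneg _)

lemma wNorm_X_pow_mul_le (hω : ∀ k, 0 ≤ ω k) {K : ℝ} (hK : ∀ k, ω (k + 1) ≤ K * ω k)
    (j : ℕ) (g : ℂ[X]) : wNorm ω (X ^ j * g) ≤ √K ^ j * wNorm ω g := by
  induction j with
  | zero => simp
  | succ j ih =>
    calc wNorm ω (X ^ (j + 1) * g) = wNorm ω (X * (X ^ j * g)) := by ring_nf
      _ ≤ √K * wNorm ω (X ^ j * g) := wNorm_X_mul_le hω hK _
      _ ≤ √K ^ (j + 1) * wNorm ω g := by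
        rw [pow_succ', mul_assoc]
        exact mul_le_mul_of_nonneg_left ih (Real.sqrt_nonneg K)

lemma exists_wNorm_mul_le (hω : ∀ k, 0 ≤ ω k) {K : ℝ} (hK : ∀ k, ω (k + 1) ≤ K * ω k)
    (h : ℂ[X]) : ∃ B, 0 < B ∧ ∀ g, wNorm ω (h * g) ≤ B * wNorm ω g := by
  set B := ∑ j ∈ range (h.natDegree + 1), ‖h.coeff j‖ * √K ^ j
  refine ⟨B + 1, by positivity, fun g => ?_⟩
  calc wNorm ω (h * g)
        = wNorm ω (∑ j ∈ range (h.natDegree + 1), C (h.coeff j) * (X ^ j * g)) := by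
        conv_lhs => rw [h.as_sum_range_C_mul_X_pow, sum_mul]
        simp only [mul_assoc]
    _ ≤ ∑ j ∈ range (h.natDegree + 1), ‖h.coeff j‖ * (√K ^ j * wNorm ω g) := by
        refine (wNorm_sum_le hω _ _).trans (sum_le_sum fun j _ => ?_)
        rw [wNorm_C_mul hω]
        exact mul_le_mul_of_nonneg_left (wNorm_X_pow_mul_le hω hK j g) (norm_nonneg _)
    _ ≤ (B + 1) * wNorm ω g := by
        simp only [← mul_assoc, ← sum_mul]
        exact mul_le_mul_of_nonneg_right (by linarith) (Real.sqrt_nonneg _)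

lemma wNormSq_C_mul (hω : ∀ k, 0 ≤ ω k) (c : ℂ) (g : ℂ[X]) :
    wNormSq ω (C c * g) = ‖c‖ ^ 2 * wNormSq ω g := by
  rw [← wNorm_sq hω, wNorm_C_mul hω, mul_pow, wNorm_sq hω]

lemma norm_add_smul_sq_of_forall_norm_le {E : Type*} [NormedAddCommGroup E]
    [InnerProductSpace ℂ E] {x y : E} (hmin : ∀ t : ℂ, ‖x‖ ≤ ‖x + t • y‖) (t : ℂ) :
    ‖x + t • y‖ ^ 2 = ‖x‖ ^ 2 + ‖t‖ ^ 2 * ‖y‖ ^ 2 := by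
  have hinf : ‖x - 0‖ = ⨅ w : ℂ ∙ y, ‖x - w‖ := by
    refine le_antisymm (le_ciInf fun w => ?_) (ciInf_le ⟨0, ?_⟩ (⟨0, zero_mem _⟩ : ℂ ∙ y))
    · obtain ⟨s, hs⟩ := Submodule.mem_span_singleton.1 w.2
      simpa [← hs, sub_eq_add_neg, ← neg_smul] using hmin (-s)
    · rintro _ ⟨w, rfl⟩
      exact norm_nonneg _
  have horth := ((ℂ ∙ y).norm_eq_iInf_iff_inner_eq_zero (zero_mem _)).1 hinf (t • y)
    (Submodule.smul_mem _ _ (Submodule.mem_span_singleton_self y))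
  rw [sub_zero] at horth
  rw [norm_add_sq (𝕜 := ℂ), horth]
  simp [norm_smul, mul_pow]

lemma wNormSq_add_C_mul_of_forall_le (hω : ∀ k, 0 ≤ ω k) {g y : ℂ[X]}
    (hmin : ∀ t : ℂ, wNormSq ω g ≤ wNormSq ω (g + C t * y)) (t : ℂ) :
    wNormSq ω (g + C t * y) = wNormSq ω g + ‖t‖ ^ 2 * wNormSq ω y := by
  set N := g.natDegree + y.natDegree + 1
  have hdeg (s : ℂ) : (g + C s * y).natDegree < N :=
    (natDegree_add_le _ _).trans_lt (max_lt (by omega)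
      ((natDegree_C_mul_le _ _).trans_lt (by omega)))
  have hvec (s : ℂ) : weightedCoeffs ω N (g + C s * y) =
      weightedCoeffs ω N g + s • weightedCoeffs ω N y := by
    rw [← smul_eq_C_mul, map_add, map_smul]
  simp only [wNormSq_eq_norm_sq hω (hdeg _), hvec,
    wNormSq_eq_norm_sq hω (N := N) (by omega : g.natDegree < N),
    wNormSq_eq_norm_sq hω (N := N) (by omega : y.natDegree < N)] at hmin ⊢
  exact norm_add_smul_sq_of_forall_norm_le
    (fun s => pow_le_pow_iff_left₀ (norm_nonneg _) (norm_nonneg _) two_ne_zero |>.1 (hmin s)) t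

end WeightedNorm

section PointEvaluation

variable {ω : ℕ → ℝ}

lemma S_pos (hω : ∀ k, 0 < ω k) (N : ℕ) : 0 < S ω N :=
  sum_pos (fun k _ => one_div_pos.2 (hω k)) nonempty_range_add_one

lemma one_le_wNormSq_mul_S (hω : ∀ k, 0 < ω k) {g : ℂ[X]} {b : ℂ}
    (hb : ‖b‖ ≤ 1) (hg : g.eval b = 1) {M : ℕ} (hM : g.natDegree ≤ M) :
    1 ≤ wNormSq ω g * S ω M := by
  have heval : 1 ≤ ∑ k ∈ range (M + 1), ‖g.coeff k‖ := by
    calc (1 : ℝ) = ‖∑ k ∈ range (M + 1), g.coeff k * b ^ k‖ := by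
          rw [← eval_eq_sum_range' (by omega), hg, norm_one]
      _ ≤ ∑ k ∈ range (M + 1), ‖g.coeff k‖ := by
          refine (norm_sum_le _ _).trans (sum_le_sum fun k _ => ?_)
          rw [norm_mul, norm_pow]
          exact mul_le_of_le_one_right (norm_nonneg _) (pow_le_one₀ (norm_nonneg _) hb)
  have hcs := sq_sum_div_le_sum_sq_div (range (M + 1)) (fun k => ‖g.coeff k‖)
    (g := fun k => 1 / ω k) fun k _ => one_div_pos.2 (hω k)
  change _ / S ω M ≤ _ at hcs
  rw [div_le_iff₀ (S_pos hω M)] at hcs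
  calc 1 ≤ (∑ k ∈ range (M + 1), ‖g.coeff k‖) ^ 2 := one_le_pow₀ heval
    _ ≤ (∑ k ∈ range (M + 1), ‖g.coeff k‖ ^ 2 / (1 / ω k)) * S ω M := hcs
    _ = wNormSq ω g * S ω M := by
      rw [wNormSq_eq_sum_range (by omega : g.natDegree < M + 1)]
      simp [mul_comm]

/-- `kN ω M · b` as a polynomial. -/
def kernelPoly (ω : ℕ → ℝ) (M : ℕ) (b : ℂ) : ℂ[X] :=
  ∑ k ∈ range (M + 1), C (starRingEnd ℂ b ^ k / ω k) * X ^ k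

lemma coeff_kernelPoly (M : ℕ) (b : ℂ) (k : ℕ) :
    (kernelPoly ω M b).coeff k =
      if k ∈ range (M + 1) then starRingEnd ℂ b ^ k / ω k else 0 := by
  simp only [kernelPoly, finsetSum_coeff, coeff_C_mul_X_pow]
  exact sum_ite_eq _ _ _

lemma eval_kernelPoly (M : ℕ) (b : ℂ) :
    (kernelPoly ω M b).eval b = ((∑ k ∈ range (M + 1), ‖b‖ ^ (2 * k) / ω k : ℝ) : ℂ) := by
  simp only [kernelPoly, eval_finsetSum, eval_mul, eval_C, eval_pow, eval_X]
  push_cast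
  refine sum_congr rfl fun k _ => ?_
  rw [div_mul_eq_mul_div, ← mul_pow, Complex.conj_mul', pow_mul]

lemma wNormSq_kernelPoly (hω : ∀ k, 0 < ω k) (M : ℕ) (b : ℂ) :
    wNormSq ω (kernelPoly ω M b) = ∑ k ∈ range (M + 1), ‖b‖ ^ (2 * k) / ω k := by
  have hdeg : (kernelPoly ω M b).natDegree < M + 1 := by
    refine Nat.lt_succ_of_le (natDegree_le_iff_coeff_eq_zero.2 fun k hk => ?_)
    rw [coeff_kernelPoly, if_neg (by simpa using hk)]
  rw [wNormSq_eq_sum_range hdeg]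
  refine sum_congr rfl fun k hk => ?_
  have hωk := (hω k).ne'
  rw [coeff_kernelPoly, if_pos hk, norm_div, norm_pow, Complex.norm_conj, Complex.norm_real,
    Real.norm_of_nonneg (hω k).le]
  field_simp
  ring

lemma exists_eval_eq_one_wNormSq_le (hω : ∀ k, 0 < ω k) {b : ℂ} (hb : 1 ≤ ‖b‖) (M : ℕ) :
    ∃ g : ℂ[X], g.eval b = 1 ∧ wNormSq ω g ≤ (S ω M)⁻¹ := by
  set T := ∑ k ∈ range (M + 1), ‖b‖ ^ (2 * k) / ω k
  have hST : S ω M ≤ T :=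
    sum_le_sum fun k _ => div_le_div_of_nonneg_right (one_le_pow₀ hb) (hω k).le
  have hT : 0 < T := (S_pos hω M).trans_le hST
  refine ⟨C (T⁻¹ : ℂ) * kernelPoly ω M b, ?_, ?_⟩
  · rw [eval_mul, eval_C, eval_kernelPoly, ← Complex.ofReal_inv, ← Complex.ofReal_mul,
      inv_mul_cancel₀ hT.ne', Complex.ofReal_one]
  · rw [wNormSq_C_mul (fun k => (hω k).le), wNormSq_kernelPoly hω, norm_inv, Complex.norm_real,
      Real.norm_of_nonneg hT.le, inv_pow, sq, mul_inv, mul_assoc, inv_mul_cancel₀ hT.ne', mul_one]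
    exact inv_anti₀ (S_pos hω M) hST

end PointEvaluation

section Cyclicity

variable {ω : ℕ → ℝ}

def IsWCyclic (ω : ℕ → ℝ) (f : ℂ[X]) : Prop :=
  ∀ ε > 0, ∃ q : ℂ[X], wNorm ω (1 - q * f) < ε

lemma isWCyclic_one : IsWCyclic ω 1 :=
  fun ε hε => ⟨1, by simpa [wNorm, wNormSq] using hε⟩

lemma isWCyclic_X_sub_C (hω : ∀ k, 0 < ω k) (hS : Tendsto (S ω) atTop atTop) {b : ℂ}
    (hb : 1 ≤ ‖b‖) : IsWCyclic ω (X - C b) := by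
  intro ε hε
  obtain ⟨M, hM⟩ := (hS.eventually_gt_atTop (ε ^ 2)⁻¹).exists
  obtain ⟨g, hgb, hg⟩ := exists_eval_eq_one_wNormSq_le hω hb M
  obtain ⟨w, hw⟩ := dvd_iff_isRoot.2 (show (1 - g).IsRoot b by simp [hgb])
  refine ⟨w, ?_⟩
  rw [mul_comm, ← hw, sub_sub_cancel, wNorm, Real.sqrt_lt' hε]
  exact hg.trans_lt (inv_lt_of_inv_lt₀ (by positivity) hM)

lemma IsWCyclic.mul (hω : ∀ k, 0 ≤ ω k) {K : ℝ} (hK : ∀ k, ω (k + 1) ≤ K * ω k)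
    {f g : ℂ[X]} (hf : IsWCyclic ω f) (hg : IsWCyclic ω g) : IsWCyclic ω (f * g) := by
  intro ε hε
  obtain ⟨w, hw⟩ := hf (ε / 2) (by positivity)
  obtain ⟨B, hB, hwf⟩ := exists_wNorm_mul_le hω hK (w * f)
  obtain ⟨q, hq⟩ := hg (ε / (2 * B)) (by positivity)
  refine ⟨w * q, ?_⟩
  calc wNorm ω (1 - w * q * (f * g)) = wNorm ω ((1 - w * f) + w * f * (1 - q * g)) := by
        congr 1; ring
    _ ≤ wNorm ω (1 - w * f) + B * wNorm ω (1 - q * g) :=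
        (wNorm_add_le hω _ _).trans (by gcongr; exact hwf _)
    _ < ε / 2 + B * (ε / (2 * B)) := by gcongr
    _ = ε := by field_simp; ring

lemma isWCyclic_of_monic (hω : ∀ k, 0 < ω k) {K : ℝ} (hK : ∀ k, ω (k + 1) ≤ K * ω k)
    (hS : Tendsto (S ω) atTop atTop) {f : ℂ[X]} (hf : f.Monic)
    (hroots : ∀ z ∈ f.roots, 1 ≤ ‖z‖) : IsWCyclic ω f := by
  rw [(IsAlgClosed.splits f).eq_prod_roots_of_monic hf]
  refine Multiset.prod_induction _ _ (fun _ _ => IsWCyclic.mul (fun k => (hω k).le) hK)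
    isWCyclic_one ?_
  simp only [Multiset.mem_map]
  rintro _ ⟨z, hz, rfl⟩
  exact isWCyclic_X_sub_C hω hS (hroots z hz)

end Cyclicity

lemma le_pow_mul_of_le_mul_succ {ω : ℕ → ℝ} {K : ℝ} (hK0 : 0 ≤ K)
    (hK : ∀ k, ω k ≤ K * ω (k + 1)) (m j : ℕ) : ω m ≤ K ^ j * ω (m + j) := by
  induction j with
  | zero => simp
  | succ j ih =>
    calc ω m ≤ K ^ j * ω (m + j) := ih
      _ ≤ K ^ j * (K * ω (m + j + 1)) := mul_le_mul_of_nonneg_left (hK _) (pow_nonneg hK0 j)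
      _ = K ^ (j + 1) * ω (m + (j + 1)) := by ring_nf

namespace IsWeight

variable {ω : ℕ → ℝ}

lemma tendsto_succ_div (hω : IsWeight ω) :
    Tendsto (fun k => ω (k + 1) / ω k) atTop (𝓝 1) := by
  obtain ⟨hpos, hmono, -, hreg, -⟩ := hω
  have hreg' := hreg.comp (tendsto_add_atTop_nat 1)
  have hle (k : ℕ) : k + 1 - Nat.sqrt (k + 1) ≤ k := by
    have : 0 < Nat.sqrt (k + 1) := Nat.sqrt_pos.2 k.succ_pos
    omega
  rcases hmono with hmono | hanti
  · refine tendsto_of_tendsto_of_tendsto_of_le_of_le tendsto_const_nhds hreg' (fun k => ?_)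
      fun k => ?_
    · exact (one_le_div (hpos k)).2 (hmono k.le_succ)
    · exact div_le_div_of_nonneg_left (hpos _).le (hpos _) (hmono (hle k))
  · refine tendsto_of_tendsto_of_tendsto_of_le_of_le hreg' tendsto_const_nhds (fun k => ?_)
      fun k => ?_
    · exact div_le_div_of_nonneg_left (hpos _).le (hpos k) (hanti (hle k))
    · exact (div_le_one (hpos k)).2 (hanti k.le_succ)

lemma exists_succ_le_mul (hω : IsWeight ω) : ∃ K, ∀ k, ω (k + 1) ≤ K * ω k := by
  obtain ⟨K, hK⟩ := hω.tendsto_succ_div.bddAbove_range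
  exact ⟨K, fun k => (div_le_iff₀ (hω.1 k)).1 (hK ⟨k, rfl⟩)⟩

lemma exists_le_mul_succ (hω : IsWeight ω) : ∃ K, ∀ k, ω k ≤ K * ω (k + 1) := by
  obtain ⟨K, hK⟩ := (hω.tendsto_succ_div.inv₀ one_ne_zero).bddAbove_range
  refine ⟨K, fun k => ?_⟩
  have : ω k / ω (k + 1) ≤ K := by simpa using hK ⟨k, rfl⟩
  exact (div_le_iff₀ (hω.1 _)).1 this

lemma tendsto_S (hω : IsWeight ω) : Tendsto (S ω) atTop atTop :=
  ((not_summable_iff_tendsto_nat_atTop_of_nonneg fun k => (one_div_pos.2 (hω.1 k)).le).1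
    hω.2.2.2.2).comp (tendsto_add_atTop_nat 1)

lemma exists_wNormSq_X_pow_mul_le (hω : IsWeight ω) (f : ℂ[X]) :
    ∃ B, 0 < B ∧ ∀ m, wNormSq ω (X ^ m * f) ≤ B * ω (m + f.natDegree) := by
  have hnonneg (k : ℕ) : 0 ≤ ω k := (hω.1 k).le
  obtain ⟨K, hK⟩ := hω.exists_succ_le_mul
  obtain ⟨L, hL⟩ := hω.exists_le_mul_succ
  have hL0 : 0 < L := pos_of_mul_pos_left ((hω.1 0).trans_le (hL 0)) (hnonneg 1)
  obtain ⟨A, hA, hAf⟩ := exists_wNorm_mul_le hnonneg hK f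
  refine ⟨A ^ 2 * L ^ f.natDegree, by positivity, fun m => ?_⟩
  calc wNormSq ω (X ^ m * f) = wNorm ω (f * X ^ m) ^ 2 := by rw [mul_comm, wNorm_sq hnonneg]
    _ ≤ (A * wNorm ω (X ^ m)) ^ 2 := pow_le_pow_left₀ (Real.sqrt_nonneg _) (hAf _) 2
    _ = A ^ 2 * ω m := by rw [mul_pow, wNorm_sq hnonneg, wNormSq_X_pow]
    _ ≤ A ^ 2 * (L ^ f.natDegree * ω (m + f.natDegree)) :=
        mul_le_mul_of_nonneg_left (le_pow_mul_of_le_mul_succ hL0.le hL _ _) (sq_nonneg A)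
    _ = A ^ 2 * L ^ f.natDegree * ω (m + f.natDegree) := by ring

end IsWeight

section OptimalApproximants

variable {ω : ℕ → ℝ} {f : ℂ[X]}

lemma IsOPA.natDegree_one_sub_mul_le {n : ℕ} {p : ℂ[X]} (hp : IsOPA ω f n p) :
    (1 - p * f).natDegree ≤ n + f.natDegree :=
  (natDegree_sub_le _ _).trans <| max_le (by simp) <|
    natDegree_mul_le.trans (by gcongr; exact natDegree_le_of_degree_le hp.1)

lemma antitone_wNormSq_of_isOPA {p : ℕ → ℂ[X]} (hp : ∀ n, IsOPA ω f n (p n)) :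
    Antitone fun n => wNormSq ω (1 - p n * f) :=
  antitone_nat_of_succ_le fun n =>
    (hp (n + 1)).2 (p n) ((hp n).1.trans (by exact_mod_cast n.le_succ))

lemma tendsto_wNormSq_of_isWCyclic (hω : ∀ k, 0 ≤ ω k) {p : ℕ → ℂ[X]}
    (hp : ∀ n, IsOPA ω f n (p n)) (hf : IsWCyclic ω f) :
    Tendsto (fun n => wNormSq ω (1 - p n * f)) atTop (𝓝 0) := by
  refine tendsto_order.2 ⟨fun c hc => .of_forall fun n => hc.trans_le (wNormSq_nonneg hω _),
    fun ε hε => ?_⟩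
  obtain ⟨q, hq⟩ := hf (√ε) (Real.sqrt_pos.2 hε)
  refine eventually_atTop.2 ⟨q.natDegree, fun n hn => ?_⟩
  calc wNormSq ω (1 - p n * f) ≤ wNormSq ω (1 - p q.natDegree * f) :=
        antitone_wNormSq_of_isOPA hp hn
    _ ≤ wNormSq ω (1 - q * f) := (hp _).2 q degree_le_natDegree
    _ < ε := (Real.sqrt_lt_sqrt_iff (wNormSq_nonneg hω _)).1 hq

lemma IsOPA.wNormSq_le_succ (hω : ∀ k, 0 ≤ ω k) (hf : f.Monic) {n : ℕ} {p p' : ℂ[X]}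
    (hp : IsOPA ω f n p) (hp' : IsOPA ω f (n + 1) p') :
    wNormSq ω (1 - p * f) ≤ wNormSq ω (1 - p' * f) +
      ‖(1 - p' * f).coeff (n + 1 + f.natDegree)‖ ^ 2 * wNormSq ω (X ^ (n + 1) * f) := by
  set t₀ := p'.coeff (n + 1)
  have hp'deg : p'.natDegree ≤ n + 1 := natDegree_le_of_degree_le hp'.1
  have htop : (1 - p' * f).coeff (n + 1 + f.natDegree) = -t₀ := by
    rw [coeff_sub, coeff_one, if_neg (by omega), coeff_mul_add_eq_of_natDegree_le hp'deg le_rfl,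
      hf.coeff_natDegree, mul_one, zero_sub]
  have hshift (t : ℂ) :
      1 - (p' - C t * X ^ (n + 1)) * f = (1 - p' * f) + C t * (X ^ (n + 1) * f) := by ring
  have hmin (t : ℂ) :
      wNormSq ω (1 - p' * f) ≤ wNormSq ω ((1 - p' * f) + C t * (X ^ (n + 1) * f)) :=
    hshift t ▸ hp'.2 _ (degree_sub_le _ _ |>.trans (max_le hp'.1 (degree_C_mul_X_pow_le _ _)))
  have hdeg : (p' - C t₀ * X ^ (n + 1)).degree ≤ (n : WithBot ℕ) := by
    refine (degree_le_iff_coeff_zero _ _).2 fun m hm => ?_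
    rw [coeff_sub, coeff_C_mul_X_pow]
    rcases eq_or_lt_of_le (Nat.succ_le_of_lt (Nat.cast_lt.1 hm)) with rfl | hlt
    · simp [t₀]
    · rw [if_neg hlt.ne', coeff_eq_zero_of_natDegree_lt (hp'deg.trans_lt hlt), sub_zero]
  calc wNormSq ω (1 - p * f) ≤ wNormSq ω (1 - (p' - C t₀ * X ^ (n + 1)) * f) := hp.2 _ hdeg
    _ = _ := by rw [hshift, wNormSq_add_C_mul_of_forall_le hω hmin, htop, norm_neg]

end OptimalApproximants

lemma sq_mul_le_one_div_sub_one_div {a v s s' δ B : ℝ} (hB : 0 < B) (hv : 0 < v) (hs : 0 < s)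
    (hs' : s' = s + 1 / v) (hδ : δ ^ 2 = 1 / (2 * B)) (ha : 0 ≤ a) (haδ : a ≤ δ / (v * s')) :
    a ^ 2 * (B * v) ≤ 1 / (2 * s) - 1 / (2 * s') := by
  have hss' : s ≤ s' := hs' ▸ le_add_of_nonneg_right (one_div_pos.2 hv).le
  have hs'0 : 0 < s' := hs.trans_le hss'
  calc a ^ 2 * (B * v) ≤ (δ / (v * s')) ^ 2 * (B * v) := by gcongr
    _ = 1 / (2 * v * s' ^ 2) := by
      rw [div_pow, hδ]
      field_simp
    _ ≤ 1 / (2 * v * (s * s')) := by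
      rw [sq]
      gcongr
    _ = 1 / (2 * s) - 1 / (2 * s') := by
      have hdiff : s' - s = 1 / v := by rw [hs']; ring
      field_simp
      rw [hdiff, mul_one_div_cancel hv.ne']

lemma exists_pos_frequently_div_le {D s v a : ℕ → ℝ} {B : ℝ} (hB : 0 < B)
    (hv : ∀ n, 0 < v n) (hs : ∀ n, 0 < s n) (hs_succ : ∀ n, s (n + 1) = s n + 1 / v (n + 1))
    (ha : ∀ n, 0 ≤ a n) (hlow : ∀ n, 1 ≤ D n * s n)
    (hstep : ∀ n, D n ≤ D (n + 1) + a (n + 1) ^ 2 * (B * v (n + 1)))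
    (hD : Tendsto D atTop (𝓝 0)) :
    ∃ δ > 0, ∃ᶠ n in atTop, δ / (v n * s n) ≤ a n := by
  set δ := √(1 / (2 * B))
  have hδ : δ ^ 2 = 1 / (2 * B) := Real.sq_sqrt (by positivity)
  refine ⟨δ, by positivity, frequently_atTop.2 fun n₀ => ?_⟩
  by_contra! hsmall
  have henergy (n : ℕ) (hn : n₀ ≤ n) :
      D n - 1 / (2 * s n) ≤ D (n + 1) - 1 / (2 * s (n + 1)) := by
    have hdrop := sq_mul_le_one_div_sub_one_div hB (hv (n + 1)) (hs n) (hs_succ n) hδ (ha (n + 1))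
      (hsmall (n + 1) (by omega)).le
    linarith [hstep n]
  have hmono : Monotone fun m => D (m + n₀) - 1 / (2 * s (m + n₀)) :=
    monotone_nat_of_le_succ fun m => by
      simpa only [Nat.add_right_comm m 1 n₀] using henergy (m + n₀) (by omega)
  have hstart : 0 < D n₀ - 1 / (2 * s n₀) := by
    have h1 : 1 / s n₀ ≤ D n₀ := (div_le_iff₀ (hs n₀)).2 (hlow n₀)
    have h2 : 1 / (2 * s n₀) = 1 / s n₀ / 2 := by ring
    have h3 := one_div_pos.2 (hs n₀)
    linarith
  obtain ⟨m, hm⟩ := ((hD.comp (tendsto_add_atTop_nat n₀)).eventually (gt_mem_nhds hstart)).exists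
  have hG := hmono (Nat.zero_le m)
  simp only [zero_add] at hG
  have hsm := one_div_pos.2 (mul_pos two_pos (hs (m + n₀)))
  simp only [Function.comp_apply] at hm
  linarith

theorem top_coefficient_lower_bound_general
    (ω : ℕ → ℝ) (hω : IsWeight ω) (f : Polynomial ℂ) (d : ℕ)
    (hmonic : f.Monic) (hdeg : f.natDegree = d)
    (hnodisk : ∀ z ∈ f.roots, 1 ≤ ‖z‖)
    (hcirc : ∃ z ∈ f.roots, ‖z‖ = 1)
    (p : ℕ → Polynomial ℂ) (hp : ∀ n, IsOPA ω f n (p n)) :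
    ∃ δ : ℝ, 0 < δ ∧ ∃ nk : ℕ → ℕ, StrictMono nk ∧
      ∀ k : ℕ, δ / (ω (nk k + d) * S ω (nk k + d)) ≤
        ‖((1 : Polynomial ℂ) - p (nk k) * f).coeff (nk k + d)‖ := by
  subst hdeg
  have hpos := hω.1
  have hnonneg (k : ℕ) : 0 ≤ ω k := (hpos k).le
  obtain ⟨b, hb, hb1⟩ := hcirc
  obtain ⟨K, hK⟩ := hω.exists_succ_le_mul
  obtain ⟨B, hB, hXf⟩ := hω.exists_wNormSq_X_pow_mul_le f
  have hlow (n : ℕ) : 1 ≤ wNormSq ω (1 - p n * f) * S ω (n + f.natDegree) :=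
    one_le_wNormSq_mul_S hpos hb1.le (by simp [(isRoot_of_mem_roots hb).eq_zero])
      (hp n).natDegree_one_sub_mul_le
  have hstep (n : ℕ) : wNormSq ω (1 - p n * f) ≤ wNormSq ω (1 - p (n + 1) * f) +
      ‖(1 - p (n + 1) * f).coeff (n + 1 + f.natDegree)‖ ^ 2 * (B * ω (n + 1 + f.natDegree)) :=
    ((hp n).wNormSq_le_succ hnonneg hmonic (hp (n + 1))).trans (by gcongr; exact hXf _)
  have hD := tendsto_wNormSq_of_isWCyclic hnonneg hp
    (isWCyclic_of_monic hpos hK hω.tendsto_S hmonic hnodisk)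
  obtain ⟨δ, hδ, hfreq⟩ := exists_pos_frequently_div_le
    (s := fun n => S ω (n + f.natDegree)) (v := fun n => ω (n + f.natDegree))
    (a := fun n => ‖(1 - p n * f).coeff (n + f.natDegree)‖)
    hB (fun n => hpos _) (fun n => S_pos hpos _)
    (fun n => by rw [Nat.add_right_comm]; exact sum_range_succ _ _) (fun n => norm_nonneg _)
    hlow hstep hD
  exact ⟨δ, hδ, extraction_of_frequently_atTop hfreq⟩

/-- Lower bound for the top coefficient of `1 - p_{n_k} f` along a subsequence. -/
theorem top_coefficient_lower_bound
    (ω : ℕ → ℝ) (hω : IsWeight ω) (f : Polynomial ℂ) (d : ℕ) (hd : 1 ≤ d)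
    (hmonic : f.Monic) (hdeg : f.natDegree = d)
    (hsimple : f.roots.Nodup)
    (hnodisk : ∀ z ∈ f.roots, 1 ≤ ‖z‖)
    (hcirc : ∃ z ∈ f.roots, ‖z‖ = 1)
    (p : ℕ → Polynomial ℂ) (hp : ∀ n, IsOPA ω f n (p n)) :
    ∃ δ : ℝ, 0 < δ ∧ ∃ nk : ℕ → ℕ, StrictMono nk ∧
      ∀ k : ℕ, δ / (ω (nk k + d) * S ω (nk k + d)) ≤
        ‖((1 : Polynomial ℂ) - p (nk k) * f).coeff (nk k + d)‖ :=
  top_coefficient_lower_bound_general ω hω f d hmonic hdeg hnodisk hcirc p hp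

end
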